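/- arXiv:2505.16115 — 2 statements merged into one kernel-verified Lean document; each statement's English description precedes it below -/
import Mathlib

section
/- Let z_1 < z_2 < ... < z_{n+1} be distinct real numbers and σ a uniformly random permutation of {1,...,n+1}. For α ∈ (0,1), let q̂ be the ⌈(n+1)(1−α)⌉-th smallest value among z_{σ(1)}, ..., z_{σ(n)} (taken as +∞ if ⌈(n+1)(1−α)⌉ > n). Then 1 − α ≤ Pr[z_{σ(n+1)} ≤ q̂] ≤ 1 − α + 1/(n+1). -/
/-!
Since the scores are increasing, the sorted calibration scores are the values of `z` at the
indices other than the held-out index `j = σ (n+1)`, in order, and the held-out score `z j` is at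
most the `k`-th of them exactly when `j` is one of the `k` smallest indices. As `σ (n+1)` is
uniform, the coverage probability is exactly `k / (n + 1)` with `k = ⌈(n+1)(1-α)⌉`, which lies in
`[1 - α, 1 - α + 1/(n+1)]`.
-/

open scoped Classical
open Finset

theorem Finset.sort_image_of_strictMono {α β : Type*} [LinearOrder α] [LinearOrder β]
    {f : α → β} (hf : StrictMono f) (s : Finset α) :
    (s.image f).sort (· ≤ ·) = (s.sort (· ≤ ·)).map f := by
  refine List.Perm.eq_of_pairwise' (r := (· ≤ ·)) (pairwise_sort _ _)
    ((pairwise_sort s _).map f fun _ _ h => hf.monotone h) ?_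
  refine List.perm_of_nodup_nodup_toFinset_eq (sort_nodup _ _)
    ((sort_nodup _ _).map hf.injective) ?_
  ext; simp

theorem Fin.image_univ_perm_castSucc {n : ℕ} (σ : Equiv.Perm (Fin (n + 1))) :
    univ.image (fun i : Fin n => σ i.castSucc) = univ.image (σ (Fin.last n)).succAbove := by
  apply coe_injective
  simp only [coe_image, coe_univ, Set.image_univ, Fin.range_succAbove]
  ext x
  simp only [Set.mem_range, Set.mem_compl_singleton_iff, ← Equiv.eq_symm_apply,
    Fin.exists_castSucc_eq]
  exact σ.symm_apply_eq.not

theorem Fin.le_succAbove_iff {n : ℕ} (p : Fin (n + 1)) (i : Fin n) :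
    p ≤ p.succAbove i ↔ p ≤ i.castSucc := by
  rw [← lt_succAbove_iff_le_castSucc, le_iff_lt_or_eq, or_iff_left (succAbove_ne p i).symm]

theorem Equiv.Perm.card_filter_apply_zero {n : ℕ} (p : Fin (n + 1) → Prop) [DecidablePred p] :
    #{σ : Equiv.Perm (Fin (n + 1)) | p (σ 0)} = #{b | p b} * n.factorial := by
  rw [show n.factorial = #(univ : Finset (Equiv.Perm (Fin n))) by
    rw [card_univ, Fintype.card_perm, Fintype.card_fin], ← card_product]
  refine card_equiv decomposeFin fun σ => ?_
  have : (decomposeFin σ).1 = σ 0 := by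
    conv_rhs => rw [← decomposeFin.symm_apply_apply σ]
    exact (decomposeFin_symm_apply_zero _ _).symm
  simp [this]

theorem Equiv.Perm.card_filter_apply {n : ℕ} (p : Fin (n + 1) → Prop) [DecidablePred p]
    (a : Fin (n + 1)) :
    #{σ : Equiv.Perm (Fin (n + 1)) | p (σ a)} = #{b | p b} * n.factorial := by
  rw [← card_filter_apply_zero]
  refine card_equiv (Equiv.mulRight (swap a 0)) fun σ => ?_
  simp

noncomputable def conformalQuantile {n : ℕ} (k : ℕ) (s : Fin n → ℝ) : EReal :=
  if k ≤ n then (((univ.image s).sort (· ≤ ·)).getD (k - 1) 0 : ℝ) else ⊤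

theorem sort_image_comp_perm_castSucc {n : ℕ} {z : Fin (n + 1) → ℝ} (hz : StrictMono z)
    (σ : Equiv.Perm (Fin (n + 1))) :
    (univ.image fun i : Fin n => z (σ i.castSucc)).sort (· ≤ ·)
      = (List.finRange n).map (z ∘ (σ (Fin.last n)).succAbove) := by
  rw [show (fun i : Fin n => z (σ i.castSucc)) = z ∘ fun i => σ i.castSucc from rfl,
    ← image_image, Fin.image_univ_perm_castSucc,
    image_image, sort_image_of_strictMono (hz.comp (Fin.strictMono_succAbove _)), Fin.sort_univ]

theorem coe_le_conformalQuantile_iff {n k : ℕ} {z : Fin (n + 1) → ℝ} (hz : StrictMono z)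
    (hk : 1 ≤ k) (σ : Equiv.Perm (Fin (n + 1))) :
    (z (σ (Fin.last n)) : EReal) ≤ conformalQuantile k (fun i => z (σ i.castSucc))
      ↔ (σ (Fin.last n) : ℕ) < k := by
  unfold conformalQuantile
  split_ifs with hkn
  · rw [sort_image_comp_perm_castSucc hz, List.getD_eq_getElem _ _ (by simp; omega),
      EReal.coe_le_coe_iff, List.getElem_map, List.getElem_finRange, Function.comp_apply,
      hz.le_iff_le, Fin.le_succAbove_iff, Fin.le_def]
    simp only [Fin.cast_mk, Fin.castSucc_mk]
    omega
  · simp only [le_top, true_iff]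
    have := (σ (Fin.last n)).isLt
    omega

theorem le_natCeil_mul_div {N β : ℝ} (hN : 0 < N) : β ≤ ⌈N * β⌉₊ / N := by
  rw [le_div_iff₀ hN, mul_comm]
  exact Nat.le_ceil _

theorem natCeil_mul_div_le {N β : ℝ} (hN : 0 < N) (hβ : 0 ≤ β) :
    ⌈N * β⌉₊ / N ≤ β + 1 / N := by
  rw [div_le_iff₀ hN, add_mul, one_div_mul_cancel hN.ne', mul_comm β]
  exact (Nat.ceil_lt_add_one (by positivity)).le

/-- Split conformal coverage guarantee in the random-permutation model:
with q̂ the ⌈(n+1)(1-α)⌉-th smallest of the first n permuted scores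
(+∞ if that rank exceeds n), the probability that the held-out score is at most q̂
lies in [1-α, 1-α+1/(n+1)]. -/
theorem stmt2 (n : ℕ) (z : Fin (n + 1) → ℝ) (hz : StrictMono z)
    (α : ℝ) (hα : α ∈ Set.Ioo (0 : ℝ) 1) :
    1 - α ≤
      ((Finset.univ.filter (fun σ : Equiv.Perm (Fin (n + 1)) =>
          (z (σ (Fin.last n)) : EReal) ≤
            (if ⌈((n : ℝ) + 1) * (1 - α)⌉₊ ≤ n then
              (((Finset.sort
                (Finset.univ.image (fun i : Fin n => z (σ i.castSucc))) (· ≤ ·)).getD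
                  (⌈((n : ℝ) + 1) * (1 - α)⌉₊ - 1) 0 : ℝ) : EReal)
            else (⊤ : EReal)))).card : ℝ)
        / (Fintype.card (Equiv.Perm (Fin (n + 1))) : ℝ) ∧
    ((Finset.univ.filter (fun σ : Equiv.Perm (Fin (n + 1)) =>
        (z (σ (Fin.last n)) : EReal) ≤
          (if ⌈((n : ℝ) + 1) * (1 - α)⌉₊ ≤ n then
            (((Finset.sort
              (Finset.univ.image (fun i : Fin n => z (σ i.castSucc))) (· ≤ ·)).getD
                (⌈((n : ℝ) + 1) * (1 - α)⌉₊ - 1) 0 : ℝ) : EReal)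
          else (⊤ : EReal)))).card : ℝ)
      / (Fintype.card (Equiv.Perm (Fin (n + 1))) : ℝ) ≤ 1 - α + 1 / (n + 1) := by
  obtain ⟨hα0, hα1⟩ := hα
  set k := ⌈((n : ℝ) + 1) * (1 - α)⌉₊
  have hk_pos : 1 ≤ k := Nat.ceil_pos.mpr (by nlinarith)
  have hk_le : k ≤ n + 1 := Nat.ceil_le.mpr (by push_cast; nlinarith)
  have hcoverage : (#{σ : Equiv.Perm (Fin (n + 1)) | (z (σ (Fin.last n)) : EReal) ≤
      conformalQuantile k (fun i => z (σ i.castSucc))} : ℝ)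
        / Fintype.card (Equiv.Perm (Fin (n + 1))) = k / (n + 1) := by
    rw [filter_congr fun σ _ => coe_le_conformalQuantile_iff hz hk_pos σ,
      Equiv.Perm.card_filter_apply (fun b => (b : ℕ) < k), Fin.card_filter_val_lt,
      min_eq_right hk_le, Fintype.card_perm, Fintype.card_fin, Nat.factorial_succ]
    push_cast
    field_simp
  exact ⟨(le_natCeil_mul_div (by positivity)).trans_eq hcoverage.symm,
    hcoverage.trans_le (natCeil_mul_div_le (by positivity) (by linarith))⟩
end

section
/- Exchangeability is preserved under filtering by a symmetric measurable predicate: if (Z_1, ..., Z_{n+1}) is modeled by a uniformly random permutation of fixed distinct values z_1, ..., z_{n+1}, and F is any predicate on values, then conditioned on the multiset {i : F(Z_i)} having size m, the values at those positions form a uniformly random permutation of the m values among z_1, ..., z_{n+1} satisfying F. -/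
/-!
Let `S` be the set of positions whose value satisfies `F`, and `G` the group of permutations fixing
every point outside `S`, of order `|S|!`. For `ρ ∈ G`, the permutation `ρσ` sends the same positions
into `S` as `σ` does, and its filtered list is that of `σ` relabelled by `ρ`. Since `G` acts simply
transitively on the orderings of `S`, the map `(σ, ρ) ↦ ρσ` is a bijection from
`{σ | the filtered list of σ is ℓ} × G` onto all permutations, so each fibre has `(n + 1)! / |S|!`
elements.
-/

open Equiv Finset

theorem List.Perm.exists_perm_map_eq {α : Type*} [DecidableEq α] {l₁ l₂ : List α}
    (h : l₁.Perm l₂) (hl : l₁.Nodup) :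
    ∃ ρ : Equiv.Perm α, (∀ x ∉ l₁, ρ x = x) ∧ l₁.map ρ = l₂ := by
  induction h with
  | nil => exact ⟨1, fun _ _ => rfl, rfl⟩
  | cons x _ ih =>
    obtain ⟨hx, hl⟩ := List.nodup_cons.mp hl
    obtain ⟨ρ, hfix, hmap⟩ := ih hl
    refine ⟨ρ, fun y hy => hfix y fun h => hy (List.mem_cons_of_mem x h), ?_⟩
    rw [List.map_cons, hfix x hx, hmap]
  | swap x y l =>
    obtain ⟨hyx, hy, hx⟩ : y ≠ x ∧ y ∉ l ∧ x ∉ l := by simp_all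
    have hfix : ∀ z, z ≠ x → z ≠ y → Equiv.swap x y z = z := fun z => swap_apply_of_ne_of_ne
    refine ⟨Equiv.swap x y, fun z hz => hfix z (by grind) (by grind), ?_⟩
    have hl : l.map (Equiv.swap x y) = l :=
      (List.map_congr_left (g := id) fun z hz => hfix z (by grind) (by grind)).trans l.map_id
    simp [hl]
  | trans h₁₂ _ ih₁ ih₂ =>
    obtain ⟨ρ₁, hfix₁, hmap₁⟩ := ih₁ hl
    obtain ⟨ρ₂, hfix₂, hmap₂⟩ := ih₂ (h₁₂.nodup_iff.mp hl)
    refine ⟨ρ₂ * ρ₁, fun x hx => ?_, by rw [← hmap₂, ← hmap₁, List.map_map]; rfl⟩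
    rw [Equiv.Perm.mul_apply, hfix₁ x hx, hfix₂ x (fun h => hx (h₁₂.mem_iff.mpr h))]

theorem Equiv.Perm.apply_mem_iff_of_forall_notMem {α : Type*} {S : Finset α} {ρ : Perm α}
    (hρ : ∀ x ∉ S, ρ x = x) (x : α) : ρ x ∈ S ↔ x ∈ S := by
  refine ⟨fun h => ?_, fun h => ?_⟩
  · by_contra hx
    exact hx (hρ x hx ▸ h)
  · by_contra hx
    exact hx (by rwa [ρ.injective (hρ _ hx)])

theorem card_filter_forall_notMem_apply_eq_self {α : Type*} [Fintype α] [DecidableEq α]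
    (S : Finset α) : #{ρ : Perm α | ∀ x ∉ S, ρ x = x} = (#S).factorial := by
  rw [← Fintype.card_subtype, ← Fintype.card_congr (Perm.subtypeEquivSubtypePerm (· ∈ S)),
    Fintype.card_perm, Fintype.card_coe]

section FilteredValues

variable {α : Type*} [Fintype α] [LinearOrder α] (S : Finset α)

def filteredValues (σ : Perm α) : List α :=
  ((univ.filter fun i => σ i ∈ S).sort (· ≤ ·)).map σ

variable {S}

theorem coe_filteredValues (σ : Perm α) : (filteredValues S σ : Multiset α) = S.val := by
  have hpre : (univ.filter fun i => σ i ∈ S) = S.map σ.symm.toEmbedding := by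
    ext i; simp
  rw [filteredValues, ← Multiset.map_coe, sort_eq, hpre, map_val, Multiset.map_map]
  simp

theorem filteredValues_mul {ρ : Perm α} (hρ : ∀ x ∉ S, ρ x = x) (σ : Perm α) :
    filteredValues S (ρ * σ) = (filteredValues S σ).map ρ := by
  simp only [filteredValues, Perm.mul_apply, Perm.apply_mem_iff_of_forall_notMem hρ, List.map_map]
  rfl

theorem eq_one_of_filteredValues_mul {ρ σ : Perm α} (hρ : ∀ x ∉ S, ρ x = x)
    (h : filteredValues S (ρ * σ) = filteredValues S σ) : ρ = 1 := by
  rw [filteredValues_mul hρ] at h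
  ext x
  by_cases hx : x ∈ S
  · have hx' : x ∈ filteredValues S σ := by
      rw [← Multiset.mem_coe, coe_filteredValues]; exact hx
    exact (List.map_eq_map_iff (g := id)).mp (h.trans (List.map_id _).symm) x hx'
  · exact hρ x hx

theorem exists_filteredValues_inv_mul_eq (τ : Perm α) {l : List α} (hl : (l : Multiset α) = S.val) :
    ∃ ρ : Perm α, (∀ x ∉ S, ρ x = x) ∧ filteredValues S (ρ⁻¹ * τ) = l := by
  have hperm : (filteredValues S τ).Perm l :=
    Multiset.coe_eq_coe.mp ((coe_filteredValues τ).trans hl.symm)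
  have hnodup : (filteredValues S τ).Nodup := by
    rw [← Multiset.coe_nodup, coe_filteredValues]; exact S.nodup
  obtain ⟨ρ, hfix, hmap⟩ := hperm.symm.exists_perm_map_eq (hperm.nodup_iff.mp hnodup)
  have hfixS : ∀ x ∉ S, ρ x = x := fun x hx =>
    hfix x (by rw [← Multiset.mem_coe, hl]; exact hx)
  refine ⟨ρ, hfixS, ?_⟩
  rw [filteredValues_mul (fun x hx => by rw [Perm.inv_eq_iff_eq, hfixS x hx]), ← hmap,
    List.map_map]
  simp

theorem card_filteredValues_eq_mul_factorial {l : List α} (hl : (l : Multiset α) = S.val) :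
    #{σ : Perm α | filteredValues S σ = l} * (#S).factorial = Fintype.card (Perm α) := by
  rw [← card_filter_forall_notMem_apply_eq_self S, ← card_product, ← card_univ]
  refine card_bij (fun p _ => p.2 * p.1) (fun _ _ => mem_univ _) ?_ ?_
  · rintro ⟨σ₁, ρ₁⟩ h₁ ⟨σ₂, ρ₂⟩ h₂ (heq : ρ₁ * σ₁ = ρ₂ * σ₂)
    simp only [mem_product, mem_filter, mem_univ, true_and] at h₁ h₂
    have hfix : ∀ x ∉ S, (ρ₂⁻¹ * ρ₁) x = x := fun x hx => by
      rw [Perm.mul_apply, h₁.2 x hx, Perm.inv_eq_iff_eq, h₂.2 x hx]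
    have hσ : (ρ₂⁻¹ * ρ₁) * σ₁ = σ₂ := by rw [mul_assoc, heq, inv_mul_cancel_left]
    have hρ : ρ₂⁻¹ * ρ₁ = 1 :=
      eq_one_of_filteredValues_mul hfix (by rw [hσ, h₁.1, h₂.1])
    obtain rfl : ρ₂ = ρ₁ := inv_mul_eq_one.mp hρ
    rw [inv_mul_cancel, one_mul] at hσ
    rw [hσ]
  · intro τ _
    obtain ⟨ρ, hfix, hρ⟩ := exists_filteredValues_inv_mul_eq τ hl
    exact ⟨(ρ⁻¹ * τ, ρ), by simpa [hρ] using hfix, mul_inv_cancel_left ρ τ⟩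

end FilteredValues

theorem List.exists_map_eq_of_coe_eq_map {α β : Type*} [Nonempty α] {f : α → β}
    (hf : f.Injective) {l : List β} {s : Multiset α} (h : (l : Multiset β) = s.map f) :
    ∃ l₀ : List α, (l₀ : Multiset α) = s ∧ l₀.map f = l := by
  refine ⟨l.map (Function.invFun f), ?_, ?_⟩
  · rw [← Multiset.map_coe, h, Multiset.map_map, Function.invFun_comp hf, Multiset.map_id]
  · refine (List.map_map ..).trans ((List.map_congr_left (g := id) fun y hy => ?_).trans l.map_id)
    obtain ⟨x, -, rfl⟩ := Multiset.mem_map.mp (h ▸ Multiset.mem_coe.mpr hy)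
    exact Function.invFun_eq ⟨x, rfl⟩

open scoped Classical in
/-- Exchangeability (uniform random permutation of fixed distinct values) is
preserved under filtering by a predicate on values: the list of values at the
filtered positions (taken in increasing position order) is uniformly distributed
over the orderings of the filtered values. Here m is the (deterministic) number
of values satisfying F, and each admissible ordering ℓ of the filtered values is
attained with probability 1/m!. -/
theorem stmt14 (n : ℕ) (z : Fin (n + 1) → ℝ) (hz : Function.Injective z)
    (F : ℝ → Prop) (ℓ : List ℝ)
    (hℓ : (↑ℓ : Multiset ℝ) =
      ((Finset.univ.filter (fun j : Fin (n + 1) => F (z j))).val).map z) :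
    ((Finset.univ.filter (fun σ : Equiv.Perm (Fin (n + 1)) =>
        ((Finset.sort
          (Finset.univ.filter (fun i : Fin (n + 1) => F (z (σ i)))) (· ≤ ·)).map
            (fun i => z (σ i))) = ℓ)).card : ℝ)
      / (Fintype.card (Equiv.Perm (Fin (n + 1))) : ℝ) =
      1 / ((Finset.univ.filter (fun j : Fin (n + 1) => F (z j))).card.factorial : ℝ) := by
  set S := univ.filter fun j => F (z j)
  obtain ⟨l, hl, rfl⟩ := List.exists_map_eq_of_coe_eq_map hz hℓ
  have hfilter : (univ.filter fun σ : Perm (Fin (n + 1)) =>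
      ((univ.filter fun i => F (z (σ i))).sort (· ≤ ·)).map (fun i => z (σ i)) = l.map z) =
      univ.filter fun σ => filteredValues S σ = l := by
    refine filter_congr fun σ _ => ?_
    have hpositions : (univ.filter fun i => F (z (σ i))) = univ.filter fun i => σ i ∈ S :=
      filter_congr fun i _ => by simp [S]
    rw [← (List.map_injective_iff.mpr hz).eq_iff, filteredValues, List.map_map, hpositions]
    rfl
  have hcount := card_filteredValues_eq_mul_factorial hl
  have hcard_pos : 0 < #{σ : Perm (Fin (n + 1)) | filteredValues S σ = l} :=
    Nat.pos_of_mul_pos_right (hcount ▸ Fintype.card_pos)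
  rw [hfilter, ← hcount, Nat.cast_mul, div_mul_cancel_left₀ (by positivity), one_div]
end
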